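/- Let G be a finite simple bipartite graph. If G is vertex decomposable, then Shed(G) is a dominating set of G. -/

import Mathlib

open scoped Classical

variable {V : Type*}

/-- `S` is an independent set of the induced subgraph of `G` on the vertex set `A`. -/
def IsIndepIn (G : SimpleGraph V) (A S : Finset V) : Prop :=
  S ⊆ A ∧ ∀ u ∈ S, ∀ v ∈ S, ¬ G.Adj u v

/-- `S` is a maximal independent set of the induced subgraph of `G` on the vertex set `A`. -/
def IsMaxIndepIn (G : SimpleGraph V) (A S : Finset V) : Prop :=
  IsIndepIn G A S ∧ ∀ T, IsIndepIn G A T → S ⊆ T → T = S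

/-- The induced subgraph of `G` on the vertex set `A` is well-covered: all of its
maximal independent sets have the same cardinality. -/
def WellCoveredOn (G : SimpleGraph V) (A : Finset V) : Prop :=
  ∀ S T, IsMaxIndepIn G A S → IsMaxIndepIn G A T → S.card = T.card

/-- The closed neighbourhood of `x` deleted from `A`: the vertices of `A` distinct from `x`
and not adjacent to `x`. -/
noncomputable def delClosedNbhd (G : SimpleGraph V) (A : Finset V) (x : V) : Finset V :=
  A.filter fun y => y ≠ x ∧ ¬ G.Adj x y

/-- The induced subgraph of `G` on the vertex set `A` is vertex decomposable: it is
well-covered, and either it has no edges, or some vertex `x ∈ A` is such that deleting `x`,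
respectively the closed neighbourhood of `x`, leaves a vertex decomposable graph. -/
def VertexDecomposableOn (G : SimpleGraph V) (A : Finset V) : Prop :=
  WellCoveredOn G A ∧
    ((∀ u ∈ A, ∀ v ∈ A, ¬ G.Adj u v) ∨
      ∃ x, ∃ _h : x ∈ A,
        VertexDecomposableOn G (A.erase x) ∧
        VertexDecomposableOn G (delClosedNbhd G A x))
termination_by A.card
decreasing_by
  · exact Finset.card_erase_lt_of_mem (by assumption)
  · exact Finset.card_lt_card
      (Finset.filter_ssubset.mpr ⟨x, by assumption, by simp⟩)

/-- A finite simple graph is well-covered if all of its maximal independent sets have the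
same cardinality. -/
def WellCovered (G : SimpleGraph V) [Fintype V] : Prop :=
  WellCoveredOn G Finset.univ

/-- A finite simple graph is vertex decomposable. -/
def VertexDecomposable (G : SimpleGraph V) [Fintype V] : Prop :=
  VertexDecomposableOn G Finset.univ

/-- The set of shedding vertices of `G` : those vertices `x` such that both `G \ x` and
`G \ N[x]` are vertex decomposable. -/
def Shed (G : SimpleGraph V) [Fintype V] : Set V :=
  {x | VertexDecomposableOn G (Finset.univ.erase x) ∧
       VertexDecomposableOn G (delClosedNbhd G Finset.univ x)}

/-- `D` is a dominating set of `G`: every vertex not in `D` is adjacent to a vertex of `D`. -/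
def IsDominatingSet (G : SimpleGraph V) (D : Set V) : Prop :=
  ∀ v, v ∉ D → ∃ u ∈ D, G.Adj u v

/-- A vertex is simplicial if its neighbourhood induces a clique. -/
def IsSimplicialVertex (G : SimpleGraph V) (x : V) : Prop :=
  ∀ u v, G.Adj x u → G.Adj x v → u ≠ v → G.Adj u v

/-!
Isolated vertices are shedding vertices, and so is every vertex `u` carrying a leaf `w`; the latter
follows along a vertex decomposition, the delicate case being the one where `w` itself is shed:
then `G \ w` is well-covered, which forces `u` to be a leaf as well.

It remains to see that every non-isolated vertex `v` has a neighbour carrying a leaf. By Hall's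
theorem a well-covered bipartite graph matches each colour class injectively into the other one
so that every maximal independent set contains `x` or its partner `g x`; hence every neighbour of
`x` is adjacent to every neighbour of `g x`. Take the neighbour `u` of `v` whose partner has the
fewest neighbours: a second neighbour `r` of `g u` would close a 4-cycle `u, g u, r, g r` of two
matching edges. Such a cycle does not survive a vertex decomposition. Deleting a shedding vertex
`x` of the cycle keeps the graph well-covered, which in a bipartite graph forces `x` to carry a
leaf; that leaf and the vertex of the cycle opposite to `x` then extend to a maximal independent
set avoiding both `x` and its partner on the cycle.
-/

open Finset

variable {G : SimpleGraph V} {A B S T : Finset V} {a b p q r u v w x y z : V}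

theorem IsIndepIn.mono (hT : IsIndepIn G A T) (hST : S ⊆ T) : IsIndepIn G A S :=
  ⟨hST.trans hT.1, fun a ha b hb => hT.2 a (hST ha) b (hST hb)⟩

theorem IsIndepIn.insert (hS : IsIndepIn G A S) (hx : x ∈ A) (h : ∀ s ∈ S, ¬ G.Adj x s) :
    IsIndepIn G A (insert x S) := by
  refine ⟨insert_subset hx hS.1, ?_⟩
  simp only [mem_insert]
  rintro a (rfl | ha) b (rfl | hb)
  · exact G.irrefl
  · exact h b hb
  · exact fun hab => h a ha hab.symm
  · exact hS.2 a ha b hb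

theorem isIndepIn_singleton (hx : x ∈ A) : IsIndepIn G A {x} :=
  ⟨singleton_subset_iff.2 hx, by simp⟩

theorem isIndepIn_pair (hx : x ∈ A) (hy : y ∈ A) (hxy : ¬ G.Adj x y) : IsIndepIn G A {x, y} :=
  (isIndepIn_singleton hy).insert hx (by simpa using hxy)

theorem isMaxIndepIn_iff :
    IsMaxIndepIn G A T ↔ IsIndepIn G A T ∧ ∀ z ∈ A, z ∉ T → ∃ t ∈ T, G.Adj z t := by
  refine ⟨fun h => ⟨h.1, fun z hz hzT => ?_⟩, fun h => ⟨h.1, fun U hU hTU => ?_⟩⟩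
  · by_contra! hno
    exact hzT (h.2 _ (h.1.insert hz hno) (subset_insert z T) ▸ mem_insert_self z T)
  · refine Subset.antisymm (fun z hzU => ?_) hTU
    by_contra hzT
    obtain ⟨t, htT, hzt⟩ := h.2 z (hU.1 hzU) hzT
    exact hU.2 z hzU t (hTU htT) hzt

theorem IsMaxIndepIn.exists_adj (hT : IsMaxIndepIn G A T) (hz : z ∈ A) (hzT : z ∉ T) :
    ∃ t ∈ T, G.Adj z t :=
  (isMaxIndepIn_iff.1 hT).2 z hz hzT

theorem IsIndepIn.exists_isMaxIndepIn_superset (hS : IsIndepIn G A S) :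
    ∃ T, S ⊆ T ∧ IsMaxIndepIn G A T := by
  have mem : ∀ {U}, IsIndepIn G A U → U ∈ A.powerset.filter (IsIndepIn G A) :=
    fun hU => mem_filter.2 ⟨mem_powerset.2 hU.1, hU⟩
  obtain ⟨T, hST, hT, hmax⟩ := (A.powerset.filter (IsIndepIn G A)).exists_le_maximal (mem hS)
  exact ⟨T, hST, (mem_filter.1 hT).2, fun U hU hTU => le_antisymm (hmax (mem hU) hTU) hTU⟩

theorem exists_isMaxIndepIn_mem (hx : x ∈ A) : ∃ T, x ∈ T ∧ IsMaxIndepIn G A T := by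
  obtain ⟨T, hxT, hT⟩ := (isIndepIn_singleton (G := G) hx).exists_isMaxIndepIn_superset
  exact ⟨T, singleton_subset_iff.1 hxT, hT⟩

theorem WellCoveredOn.card_le (hwc : WellCoveredOn G A) (hS : IsIndepIn G A S)
    (hT : IsMaxIndepIn G A T) : S.card ≤ T.card := by
  obtain ⟨U, hSU, hU⟩ := hS.exists_isMaxIndepIn_superset
  exact (card_le_card hSU).trans (hwc U T hU hT).le

theorem mem_delClosedNbhd : y ∈ delClosedNbhd G A x ↔ y ∈ A ∧ y ≠ x ∧ ¬ G.Adj x y := by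
  simp [delClosedNbhd]

theorem delClosedNbhd_subset_erase : delClosedNbhd G A x ⊆ A.erase x := fun _ hy =>
  mem_erase.2 ⟨(mem_delClosedNbhd.1 hy).2.1, (mem_delClosedNbhd.1 hy).1⟩

theorem delClosedNbhd_erase_comm :
    delClosedNbhd G (A.erase v) x = (delClosedNbhd G A x).erase v := by
  ext; simp only [mem_delClosedNbhd, mem_erase]; tauto

theorem delClosedNbhd_comm :
    delClosedNbhd G (delClosedNbhd G A u) x = delClosedNbhd G (delClosedNbhd G A x) u := by
  ext; simp only [mem_delClosedNbhd]; tauto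

theorem delClosedNbhd_erase_of_adj (h : G.Adj x v) :
    delClosedNbhd G (A.erase v) x = delClosedNbhd G A x := by
  ext z; simp only [mem_delClosedNbhd, mem_erase]
  exact ⟨fun ⟨⟨_, hz⟩, hzx, hxz⟩ => ⟨hz, hzx, hxz⟩,
    fun ⟨hz, hzx, hxz⟩ => ⟨⟨fun hzv => hxz (hzv ▸ h), hz⟩, hzx, hxz⟩⟩

theorem delClosedNbhd_of_isolated (h : ∀ z ∈ A, ¬ G.Adj v z) :
    delClosedNbhd G A v = A.erase v := by
  ext z; simp only [mem_delClosedNbhd, mem_erase]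
  exact ⟨fun ⟨hz, hzv, _⟩ => ⟨hzv, hz⟩, fun ⟨hzv, hz⟩ => ⟨hz, hzv, h z hz⟩⟩

theorem IsMaxIndepIn.insert_of_delClosedNbhd (hS : IsMaxIndepIn G (delClosedNbhd G A x) S)
    (hx : x ∈ A) : IsMaxIndepIn G A (insert x S) := by
  have hSA : S ⊆ A := hS.1.1.trans (filter_subset _ _)
  refine isMaxIndepIn_iff.2 ⟨IsIndepIn.insert ⟨hSA, hS.1.2⟩ hx
    fun s hs => (mem_delClosedNbhd.1 (hS.1.1 hs)).2.2, fun z hz hzS => ?_⟩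
  rw [mem_insert, not_or] at hzS
  by_cases hxz : G.Adj x z
  · exact ⟨x, mem_insert_self x S, hxz.symm⟩
  · obtain ⟨t, htS, hzt⟩ := hS.exists_adj (mem_delClosedNbhd.2 ⟨hz, hzS.1, hxz⟩) hzS.2
    exact ⟨t, mem_insert_of_mem htS, hzt⟩

theorem IsMaxIndepIn.erase (hT : IsMaxIndepIn G A T) (hxT : x ∉ T) :
    IsMaxIndepIn G (A.erase x) T :=
  isMaxIndepIn_iff.2 ⟨⟨fun _ hz => mem_erase.2 ⟨fun h => hxT (h ▸ hz), hT.1.1 hz⟩, hT.1.2⟩,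
    fun _ hz hzT => hT.exists_adj (mem_of_mem_erase hz) hzT⟩

theorem IsMaxIndepIn.of_erase (hx : x ∈ A) (hT : IsMaxIndepIn G (A.erase x) T) :
    IsMaxIndepIn G A T ∨ IsMaxIndepIn G A (insert x T) := by
  have hTA : IsIndepIn G A T := ⟨hT.1.1.trans (erase_subset x A), hT.1.2⟩
  by_cases hxT : ∃ t ∈ T, G.Adj x t
  · refine Or.inl (isMaxIndepIn_iff.2 ⟨hTA, fun z hz hzT => ?_⟩)
    by_cases hzx : z = x
    · exact hzx ▸ hxT
    · exact hT.exists_adj (mem_erase.2 ⟨hzx, hz⟩) hzT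
  · push Not at hxT
    refine Or.inr (isMaxIndepIn_iff.2 ⟨hTA.insert hx hxT, fun z hz hzT => ?_⟩)
    rw [mem_insert, not_or] at hzT
    obtain ⟨t, htT, hzt⟩ := hT.exists_adj (mem_erase.2 ⟨hzT.1, hz⟩) hzT.2
    exact ⟨t, mem_insert_of_mem htT, hzt⟩

theorem wellCoveredOn_delClosedNbhd (hwc : WellCoveredOn G A) (hx : x ∈ A) :
    WellCoveredOn G (delClosedNbhd G A x) := by
  intro S T hS hT
  have hxS : x ∉ S := fun h => (mem_delClosedNbhd.1 (hS.1.1 h)).2.1 rfl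
  have hxT : x ∉ T := fun h => (mem_delClosedNbhd.1 (hT.1.1 h)).2.1 rfl
  have := hwc _ _ (hS.insert_of_delClosedNbhd hx) (hT.insert_of_delClosedNbhd hx)
  rwa [card_insert_of_notMem hxS, card_insert_of_notMem hxT, Nat.add_right_cancel_iff] at this

theorem WellCoveredOn.exists_adj_forall_not_adj (hwc : WellCoveredOn G A)
    (hwc' : WellCoveredOn G (A.erase x)) (hx : x ∈ A) (hy : y ∈ A) (hxy : G.Adj x y)
    (hS : IsIndepIn G (delClosedNbhd G A x) S) :
    ∃ z ∈ A, G.Adj x z ∧ ∀ s ∈ S, ¬ G.Adj z s := by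
  -- A set `S` dominating `N(x)`, extended to a maximal `T` of `A \ N[x]`, would be maximal in
  -- `A \ x` too; then `T ∪ {x}` and `T` would both have the size of a maximal set through `y`.
  by_contra! hdom
  obtain ⟨T, hST, hT⟩ := hS.exists_isMaxIndepIn_superset
  have hxT : x ∉ T := fun h => (mem_delClosedNbhd.1 (hT.1.1 h)).2.1 rfl
  have hTx : IsMaxIndepIn G (A.erase x) T := by
    refine isMaxIndepIn_iff.2 ⟨⟨hT.1.1.trans delClosedNbhd_subset_erase, hT.1.2⟩,
      fun z hz hzT => ?_⟩
    obtain ⟨hzx, hzA⟩ := mem_erase.1 hz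
    by_cases hxz : G.Adj x z
    · obtain ⟨s, hs, hzs⟩ := hdom z hzA hxz
      exact ⟨s, hST hs, hzs⟩
    · exact hT.exists_adj (mem_delClosedNbhd.2 ⟨hzA, hzx, hxz⟩) hzT
  obtain ⟨U, hyU, hU⟩ := exists_isMaxIndepIn_mem (G := G) hy
  have hxU : x ∉ U := fun h => hU.1.2 x h y hyU hxy
  have h₁ := hwc _ _ (hT.insert_of_delClosedNbhd hx) hU
  have h₂ := hwc' _ _ hTx (hU.erase hxU)
  rw [card_insert_of_notMem hxT] at h₁
  omega

def IsLeafAt (G : SimpleGraph V) (A : Finset V) (w u : V) : Prop :=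
  G.Adj w u ∧ ∀ z ∈ A, G.Adj w z → z = u

theorem IsLeafAt.mono (h : IsLeafAt G A w u) (hBA : B ⊆ A) : IsLeafAt G B w u :=
  ⟨h.1, fun z hz => h.2 z (hBA hz)⟩

theorem IsLeafAt.symm_of_wellCoveredOn (h : IsLeafAt G A w u) (hwc : WellCoveredOn G A)
    (hwc' : WellCoveredOn G (A.erase w)) (hw : w ∈ A) (hu : u ∈ A) : IsLeafAt G A u w := by
  refine ⟨h.1.symm, fun t ht hut => ?_⟩
  by_contra htw
  have htS : IsIndepIn G (delClosedNbhd G A w) {t} :=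
    isIndepIn_singleton <| mem_delClosedNbhd.2
      ⟨ht, htw, fun hwt => G.ne_of_adj hut (h.2 t ht hwt).symm⟩
  obtain ⟨z, hz, hwz, hzt⟩ := hwc.exists_adj_forall_not_adj hwc' hw hu h.1 htS
  exact hzt t (mem_singleton_self t) (h.2 z hz hwz ▸ hut)

theorem IsLeafAt.wellCoveredOn_erase (h : IsLeafAt G A w u) (hw : w ∈ A)
    (hwc : WellCoveredOn G A) : WellCoveredOn G (A.erase u) := by
  have hmax : ∀ {T}, IsMaxIndepIn G (A.erase u) T → IsMaxIndepIn G A T := by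
    intro T hT
    have hwT : w ∈ T := by
      by_contra hwT
      obtain ⟨t, htT, hwt⟩ := hT.exists_adj (mem_erase.2 ⟨G.ne_of_adj h.1, hw⟩) hwT
      exact (mem_erase.1 (hT.1.1 htT)).1 (h.2 t (mem_of_mem_erase (hT.1.1 htT)) hwt)
    refine isMaxIndepIn_iff.2 ⟨⟨hT.1.1.trans (erase_subset u A), hT.1.2⟩, fun z hz hzT => ?_⟩
    by_cases hzu : z = u
    · exact ⟨w, hwT, hzu ▸ h.1.symm⟩
    · exact hT.exists_adj (mem_erase.2 ⟨hzu, hz⟩) hzT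
  exact fun S T hS hT => hwc S T (hmax hS) (hmax hT)

theorem VertexDecomposableOn.wellCoveredOn (h : VertexDecomposableOn G A) :
    WellCoveredOn G A := by
  rw [VertexDecomposableOn] at h
  exact h.1

theorem VertexDecomposableOn.of_edgeless (h : ∀ u ∈ A, ∀ v ∈ A, ¬ G.Adj u v) :
    VertexDecomposableOn G A := by
  have hmax : ∀ {S}, IsMaxIndepIn G A S → S = A := fun hS =>
    (hS.2 A ⟨Subset.rfl, h⟩ hS.1.1).symm
  rw [VertexDecomposableOn]
  exact ⟨fun S T hS hT => by rw [hmax hS, hmax hT], Or.inl h⟩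

theorem VertexDecomposableOn.of_shed (hwc : WellCoveredOn G A) (hx : x ∈ A)
    (h₁ : VertexDecomposableOn G (A.erase x))
    (h₂ : VertexDecomposableOn G (delClosedNbhd G A x)) : VertexDecomposableOn G A := by
  rw [VertexDecomposableOn]
  exact ⟨hwc, Or.inr ⟨x, hx, h₁, h₂⟩⟩

theorem VertexDecomposableOn.induction {P : Finset V → Prop}
    (edgeless : ∀ A, (∀ u ∈ A, ∀ v ∈ A, ¬ G.Adj u v) → P A)
    (shed : ∀ A x, x ∈ A → WellCoveredOn G A →
      VertexDecomposableOn G (A.erase x) → VertexDecomposableOn G (delClosedNbhd G A x) →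
      P (A.erase x) → P (delClosedNbhd G A x) → P A)
    (h : VertexDecomposableOn G A) : P A := by
  induction A using Finset.strongInduction with
  | H A ih =>
    rw [VertexDecomposableOn] at h
    obtain ⟨hwc, hA | ⟨x, hx, h₁, h₂⟩⟩ := h
    · exact edgeless A hA
    · exact shed A x hx hwc h₁ h₂ (ih _ (erase_ssubset hx) h₁)
        (ih _ ((delClosedNbhd_subset_erase).trans_ssubset (erase_ssubset hx)) h₂)

theorem VertexDecomposableOn.erase_of_isolated (hvd : VertexDecomposableOn G A) (hv : v ∈ A)
    (hiso : ∀ z ∈ A, ¬ G.Adj v z) : VertexDecomposableOn G (A.erase v) := by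
  refine hvd.induction (P := fun A => v ∈ A → (∀ z ∈ A, ¬ G.Adj v z) →
    VertexDecomposableOn G (A.erase v)) ?_ ?_ hv hiso
  · exact fun A hA _ _ =>
      of_edgeless fun a ha b hb => hA a (mem_of_mem_erase ha) b (mem_of_mem_erase hb)
  · intro A x hx hwc h₁ _ ih₁ ih₂ hv hiso
    by_cases hxv : x = v
    · exact hxv ▸ h₁
    refine of_shed (delClosedNbhd_of_isolated hiso ▸ wellCoveredOn_delClosedNbhd hwc hv)
      (mem_erase.2 ⟨hxv, hx⟩) ?_ ?_
    · rw [erase_right_comm]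
      exact ih₁ (mem_erase.2 ⟨Ne.symm hxv, hv⟩) fun z hz => hiso z (mem_of_mem_erase hz)
    · rw [delClosedNbhd_erase_comm]
      exact ih₂ (mem_delClosedNbhd.2 ⟨hv, Ne.symm hxv, fun h => hiso x hx h.symm⟩)
        fun z hz => hiso z (filter_subset _ _ hz)

theorem IsLeafAt.delClosedNbhd_eq (h : IsLeafAt G A w u) :
    delClosedNbhd G A w = (A.erase w).erase u := by
  ext z; simp only [mem_delClosedNbhd, mem_erase]
  exact ⟨fun ⟨hz, hzw, hwz⟩ => ⟨fun hzu => hwz (hzu ▸ h.1), hzw, hz⟩,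
    fun ⟨hzu, hzw, hz⟩ => ⟨hz, hzw, fun hwz => hzu (h.2 z hz hwz)⟩⟩

theorem IsLeafAt.vertexDecomposableOn (h : IsLeafAt G A w u) (hvd : VertexDecomposableOn G A)
    (hw : w ∈ A) (hu : u ∈ A) :
    VertexDecomposableOn G (A.erase u) ∧ VertexDecomposableOn G (delClosedNbhd G A u) := by
  refine hvd.induction (P := fun A => ∀ w u, IsLeafAt G A w u → w ∈ A → u ∈ A →
    VertexDecomposableOn G (A.erase u) ∧ VertexDecomposableOn G (delClosedNbhd G A u))
    ?_ ?_ w u h hw hu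
  · exact fun A hA w u h hw hu => absurd h.1 (hA w hw u hu)
  intro A x hx hwc h₁ h₂ ih₁ ih₂ w u h hw hu
  have hwcu := h.wellCoveredOn_erase hw hwc
  by_cases hxu : x = u
  · exact hxu ▸ ⟨h₁, h₂⟩
  have hxAu : x ∈ A.erase u := mem_erase.2 ⟨hxu, hx⟩
  by_cases hxw : x = w
  · -- Then `u` is a leaf as well, and both `A \ u` and `A \ N[u]` reduce to `A \ N[w]`.
    subst hxw
    have hN : (A.erase u).erase x = delClosedNbhd G A x := by
      rw [h.delClosedNbhd_eq, erase_right_comm]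
    refine ⟨.of_shed hwcu hxAu (hN ▸ h₂)
      (by rwa [delClosedNbhd_erase_of_adj h.1]), ?_⟩
    rw [(h.symm_of_wellCoveredOn hwc h₁.wellCoveredOn hx hu).delClosedNbhd_eq, hN]
    exact h₂
  obtain ⟨ih₁u, ih₁N⟩ := ih₁ w u (h.mono (erase_subset x A))
    (mem_erase.2 ⟨Ne.symm hxw, hw⟩) (mem_erase.2 ⟨Ne.symm hxu, hu⟩)
  have hAxu : VertexDecomposableOn G ((A.erase u).erase x) := by
    rw [erase_right_comm]; exact ih₁u
  by_cases hux : G.Adj u x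
  · exact ⟨.of_shed hwcu hxAu hAxu (by rwa [delClosedNbhd_erase_of_adj hux.symm]),
      by rw [← delClosedNbhd_erase_of_adj hux]; exact ih₁N⟩
  obtain ⟨ih₂u, ih₂N⟩ := ih₂ w u (h.mono (filter_subset _ _))
    (mem_delClosedNbhd.2 ⟨hw, Ne.symm hxw, fun hxw' => hxu (h.2 x hx hxw'.symm)⟩)
    (mem_delClosedNbhd.2 ⟨hu, Ne.symm hxu, fun hxu' => hux hxu'.symm⟩)
  refine ⟨.of_shed hwcu hxAu hAxu (by rw [delClosedNbhd_erase_comm]; exact ih₂u),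
    .of_shed (wellCoveredOn_delClosedNbhd hwc hu) (mem_delClosedNbhd.2 ⟨hx, hxu, hux⟩) ?_ ?_⟩
  · rw [← delClosedNbhd_erase_comm]; exact ih₁N
  · rw [delClosedNbhd_comm]; exact ih₂N

def MeetsAllMaxIndep (G : SimpleGraph V) (A : Finset V) (p q : V) : Prop :=
  ∀ T, IsMaxIndepIn G A T → p ∈ T ∨ q ∈ T

theorem MeetsAllMaxIndep.symm (h : MeetsAllMaxIndep G A p q) : MeetsAllMaxIndep G A q p :=
  fun T hT => (h T hT).symm

theorem MeetsAllMaxIndep.erase (h : MeetsAllMaxIndep G A p q) (hx : x ∈ A) (hp : p ≠ x)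
    (hq : q ≠ x) : MeetsAllMaxIndep G (A.erase x) p q := by
  intro T hT
  rcases hT.of_erase hx with hT' | hT'
  · exact h T hT'
  · simpa [hp, hq] using h _ hT'

theorem MeetsAllMaxIndep.adj (h : MeetsAllMaxIndep G A p q) (ha : a ∈ A) (hb : b ∈ A)
    (hpa : G.Adj p a) (hqb : G.Adj q b) : G.Adj a b := by
  by_contra hab
  obtain ⟨T, hT_sub, hT⟩ := (isIndepIn_pair ha hb hab).exists_isMaxIndepIn_superset
  rcases h T hT with hp | hq
  · exact hT.1.2 p hp a (hT_sub (mem_insert_self a _)) hpa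
  · exact hT.1.2 q hq b (hT_sub (by simp)) hqb

theorem MeetsAllMaxIndep.filter_adj_subset (h : MeetsAllMaxIndep G A p q) (ha : a ∈ A)
    (hpa : G.Adj p a) : A.filter (G.Adj q) ⊆ A.filter (G.Adj a) := fun _ hb =>
  mem_filter.2 ⟨(mem_filter.1 hb).1, h.adj ha (mem_filter.1 hb).1 hpa (mem_filter.1 hb).2⟩

theorem Bool.eq_of_ne_of_ne {a b c : Bool} (ha : a ≠ c) (hb : b ≠ c) : a = b := by
  cases a <;> cases b <;> cases c <;> simp_all

theorem SimpleGraph.Coloring.eq_of_adj_of_adj (C : G.Coloring Bool) {c : V} (hab : G.Adj a b)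
    (hbc : G.Adj b c) : C a = C c :=
  Bool.eq_of_ne_of_ne (C.valid hab) (C.valid hbc).symm

theorem WellCoveredOn.exists_isLeafAt (C : G.Coloring Bool) (hwc : WellCoveredOn G A)
    (hwc' : WellCoveredOn G (A.erase x)) (hx : x ∈ A) (hy : y ∈ A) (hxy : G.Adj x y) :
    ∃ z ∈ A, IsLeafAt G A z x := by
  have hS : IsIndepIn G (delClosedNbhd G A x) (A.filter fun s => s ≠ x ∧ C s = C x) := by
    refine ⟨fun s hs => ?_, fun s hs t ht hst => ?_⟩
    · obtain ⟨hsA, hsx, hcs⟩ := mem_filter.1 hs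
      exact mem_delClosedNbhd.2 ⟨hsA, hsx, fun h => C.valid h hcs.symm⟩
    · exact C.valid hst ((mem_filter.1 hs).2.2.trans (mem_filter.1 ht).2.2.symm)
  obtain ⟨z, hz, hxz, hzS⟩ := hwc.exists_adj_forall_not_adj hwc' hx hy hxy hS
  refine ⟨z, hz, hxz.symm, fun t ht hzt => ?_⟩
  by_contra htx
  exact hzS t (mem_filter.2 ⟨ht, htx, C.eq_of_adj_of_adj hzt.symm hxz.symm⟩) hzt

theorem MeetsAllMaxIndep.not_wellCoveredOn_erase (C : G.Coloring Bool)
    (h : MeetsAllMaxIndep G A p q) (hwc : WellCoveredOn G A) (hp : p ∈ A) (hq : q ∈ A)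
    (hr : r ∈ A) (hpq : G.Adj p q) (hqr : G.Adj q r) (hpr : p ≠ r) : ¬ WellCoveredOn G (A.erase p) := by
  intro hwc'
  obtain ⟨z, hz, hzp⟩ := hwc.exists_isLeafAt C hwc' hp hq hpq
  obtain ⟨T, hT_sub, hT⟩ :=
    (isIndepIn_pair hz hr fun hzr => hpr (hzp.2 r hr hzr).symm).exists_isMaxIndepIn_superset
  rcases h T hT with hpT | hqT
  · exact hT.1.2 z (hT_sub (mem_insert_self z _)) p hpT hzp.1
  · exact hT.1.2 q hqT r (hT_sub (by simp)) hqr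

theorem VertexDecomposableOn.not_meetsAllMaxIndep_of_cycle (C : G.Coloring Bool) {c d : V}
    (hvd : VertexDecomposableOn G A) (ha : a ∈ A) (hb : b ∈ A) (hc : c ∈ A) (hd : d ∈ A)
    (hab : G.Adj a b) (hbc : G.Adj b c) (hcd : G.Adj c d) (hda : G.Adj d a)
    (hac : a ≠ c) (hbd : b ≠ d) (h₁ : MeetsAllMaxIndep G A a b) :
    ¬ MeetsAllMaxIndep G A c d := by
  refine hvd.induction (P := fun A => a ∈ A → b ∈ A → c ∈ A → d ∈ A →
    MeetsAllMaxIndep G A a b → ¬ MeetsAllMaxIndep G A c d) ?_ ?_ ha hb hc hd h₁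
  · exact fun A hA ha hb _ _ _ _ => hA a ha b hb hab
  intro A x hx hwc h₁ _ ih _ ha hb hc hd hm₁ hm₂
  have hwc' := h₁.wellCoveredOn
  by_cases hxa : x = a
  · exact hm₁.not_wellCoveredOn_erase C hwc ha hb hc hab hbc hac (hxa ▸ hwc')
  by_cases hxb : x = b
  · exact hm₁.symm.not_wellCoveredOn_erase C hwc hb ha hd hab.symm hda.symm hbd (hxb ▸ hwc')
  by_cases hxc : x = c
  · exact hm₂.not_wellCoveredOn_erase C hwc hc hd ha hcd hda hac.symm (hxc ▸ hwc')
  by_cases hxd : x = d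
  · exact hm₂.symm.not_wellCoveredOn_erase C hwc hd hc hb hcd.symm hbc.symm hbd.symm
      (hxd ▸ hwc')
  exact ih (mem_erase.2 ⟨Ne.symm hxa, ha⟩) (mem_erase.2 ⟨Ne.symm hxb, hb⟩)
    (mem_erase.2 ⟨Ne.symm hxc, hc⟩) (mem_erase.2 ⟨Ne.symm hxd, hd⟩)
    (hm₁.erase hx (Ne.symm hxa) (Ne.symm hxb)) (hm₂.erase hx (Ne.symm hxc) (Ne.symm hxd))

noncomputable def nonIsolatedOfColor (C : G.Coloring Bool) (A : Finset V) (c : Bool) :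
    Finset V :=
  A.filter fun z => C z = c ∧ ∃ y ∈ A, G.Adj z y

theorem isMaxIndepIn_sdiff_nonIsolatedOfColor (C : G.Coloring Bool) (c : Bool) :
    IsMaxIndepIn G A (A \ nonIsolatedOfColor C A c) := by
  have hmem : ∀ {z}, z ∈ A \ nonIsolatedOfColor C A c →
      z ∈ A ∧ (C z = c → ∀ y ∈ A, ¬ G.Adj z y) := by
    intro z hz
    simp only [nonIsolatedOfColor, mem_sdiff, mem_filter] at hz
    exact ⟨hz.1, fun hc y hy hzy => hz.2 ⟨hz.1, hc, y, hy, hzy⟩⟩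
  refine isMaxIndepIn_iff.2 ⟨⟨sdiff_subset, fun z hz z' hz' hzz' => ?_⟩, fun z hz hzX => ?_⟩
  · have hcz : C z ≠ c := fun hc => (hmem hz).2 hc z' (hmem hz').1 hzz'
    have hcz' : C z' ≠ c := fun hc => (hmem hz').2 hc z (hmem hz).1 hzz'.symm
    exact C.valid hzz' (Bool.eq_of_ne_of_ne hcz hcz')
  · rw [mem_sdiff, not_and, not_not] at hzX
    obtain ⟨-, hcz, y, hy, hzy⟩ := mem_filter.1 (hzX hz)
    refine ⟨y, mem_sdiff.2 ⟨hy, fun hyX => C.valid hzy ?_⟩, hzy⟩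
    exact hcz.trans (mem_filter.1 hyX).2.1.symm

/-- Hall's condition for the colour class `c`: `S` together with the vertices of the maximal
independent set `A \ nonIsolatedOfColor C A c` outside `N(S)` is independent. -/
theorem WellCoveredOn.card_le_card_nbrs (C : G.Coloring Bool) (hwc : WellCoveredOn G A)
    {c : Bool} (hS : S ⊆ nonIsolatedOfColor C A c) :
    S.card ≤ (A.filter fun y => ∃ x ∈ S, G.Adj x y).card := by
  set N := A.filter fun y => ∃ x ∈ S, G.Adj x y
  set M := A \ nonIsolatedOfColor C A c
  have hM : IsMaxIndepIn G A M := isMaxIndepIn_sdiff_nonIsolatedOfColor C c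
  have hcol : ∀ s ∈ S, C s = c := fun s hs => (mem_filter.1 (hS hs)).2.1
  have hSN : ∀ s ∈ S, ∀ z ∈ M \ N, ¬ G.Adj s z := fun s hs z hz hsz =>
    (mem_sdiff.1 hz).2 (mem_filter.2 ⟨(mem_sdiff.1 (mem_sdiff.1 hz).1).1, s, hs, hsz⟩)
  have hW : IsIndepIn G A (S ∪ M \ N) := by
    refine ⟨union_subset (hS.trans (filter_subset _ _)) (sdiff_subset.trans sdiff_subset), ?_⟩
    simp only [mem_union]
    rintro a (ha | ha) b (hb | hb)
    · exact fun hab => C.valid hab ((hcol a ha).trans (hcol b hb).symm)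
    · exact hSN a ha b hb
    · exact fun hab => hSN b hb a ha hab.symm
    · exact hM.1.2 a (mem_sdiff.1 ha).1 b (mem_sdiff.1 hb).1
  have hdisj : Disjoint S (M \ N) := disjoint_left.2 fun s hs hsM =>
    (mem_sdiff.1 (mem_sdiff.1 hsM).1).2 (hS hs)
  have h₁ := hwc.card_le hW hM
  rw [card_union_of_disjoint hdisj] at h₁
  have h₂ := le_card_sdiff N M
  omega

theorem WellCoveredOn.exists_injOn_adj (C : G.Coloring Bool) (hwc : WellCoveredOn G A)
    (c : Bool) : ∃ g : V → V, Set.InjOn g (nonIsolatedOfColor C A c) ∧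
      ∀ x ∈ nonIsolatedOfColor C A c, g x ∈ A ∧ G.Adj x (g x) := by
  set X := nonIsolatedOfColor C A c
  have hall : ∀ s : Finset X, s.card ≤ (s.biUnion fun x => A.filter (G.Adj x)).card := by
    intro s
    calc s.card = (s.image Subtype.val).card :=
          (card_image_of_injective _ Subtype.val_injective).symm
      _ ≤ (A.filter fun y => ∃ x ∈ s.image Subtype.val, G.Adj x y).card :=
        hwc.card_le_card_nbrs C fun x hx => by
          obtain ⟨x, -, rfl⟩ := mem_image.1 hx
          exact x.2
      _ ≤ (s.biUnion fun x => A.filter (G.Adj x)).card := card_le_card fun y hy => by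
          simp only [mem_filter, mem_image] at hy
          obtain ⟨hy, _, ⟨x, hx, rfl⟩, hxy⟩ := hy
          exact mem_biUnion.2 ⟨x, hx, mem_filter.2 ⟨hy, hxy⟩⟩
  obtain ⟨g, hg, hgA⟩ := (all_card_le_biUnion_card_iff_exists_injective _).1 hall
  refine ⟨fun z => if hz : z ∈ X then g ⟨z, hz⟩ else z, fun a ha b hb hab => ?_,
    fun x hx => ?_⟩
  · rw [mem_coe] at ha hb
    dsimp only at hab
    rw [dif_pos ha, dif_pos hb] at hab
    exact congrArg Subtype.val (hg hab)
  · simpa [dif_pos hx] using hgA ⟨x, hx⟩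

/-- If `T` missed both `x` and `g x`, replacing `T ∩ nonIsolatedOfColor C A c` by its image
under `g` and adding `g x` would give a subset of the independent set
`A \ nonIsolatedOfColor C A c` larger than `T`. -/
theorem WellCoveredOn.meetsAllMaxIndep_of_injOn (C : G.Coloring Bool)
    (hwc : WellCoveredOn G A) {c : Bool} {g : V → V}
    (hg : Set.InjOn g (nonIsolatedOfColor C A c))
    (hgA : ∀ x ∈ nonIsolatedOfColor C A c, g x ∈ A ∧ G.Adj x (g x))
    (hx : x ∈ nonIsolatedOfColor C A c) : MeetsAllMaxIndep G A x (g x) := by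
  set X := nonIsolatedOfColor C A c
  intro T hT
  by_contra! hxT
  set TX := T.filter (· ∈ X)
  have hTX : TX ⊆ X := fun t ht => (mem_filter.1 ht).2
  have hgX : ∀ y ∈ X, g y ∈ A \ X := fun y hy => mem_sdiff.2 ⟨(hgA y hy).1, fun hgy =>
    C.valid (hgA y hy).2 ((mem_filter.1 hy).2.1.trans (mem_filter.1 hgy).2.1.symm)⟩
  have hgT : ∀ t ∈ TX, g t ∉ T := fun t ht hgt =>
    hT.1.2 t (mem_filter.1 ht).1 (g t) hgt (hgA t (hTX ht)).2
  have hW : insert (g x) (T \ TX ∪ TX.image g) ⊆ A \ X := by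
    refine insert_subset (hgX x hx) (union_subset (fun t ht => ?_) fun z hz => ?_)
    · obtain ⟨htT, htX⟩ := mem_sdiff.1 ht
      exact mem_sdiff.2 ⟨hT.1.1 htT, fun h => htX (mem_filter.2 ⟨htT, h⟩)⟩
    · obtain ⟨t, ht, rfl⟩ := mem_image.1 hz
      exact hgX t (hTX ht)
  have hgx : g x ∉ T \ TX ∪ TX.image g := by
    rw [mem_union, mem_image, not_or]
    refine ⟨fun h => hxT.2 (mem_sdiff.1 h).1, fun ⟨t, ht, hgt⟩ => hxT.1 ?_⟩
    exact hg (hTX ht) hx hgt ▸ (mem_filter.1 ht).1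
  have hdisj : Disjoint (T \ TX) (TX.image g) := disjoint_right.2 fun z hz hzT => by
    obtain ⟨t, ht, rfl⟩ := mem_image.1 hz
    exact hgT t ht (mem_sdiff.1 hzT).1
  have hcard := hwc.card_le ((isMaxIndepIn_sdiff_nonIsolatedOfColor C c).1.mono hW) hT
  rw [card_insert_of_notMem hgx, card_union_of_disjoint hdisj,
    card_image_of_injOn (hg.mono (coe_subset.2 hTX)),
    card_sdiff_add_card_eq_card (filter_subset _ _)] at hcard
  omega

theorem VertexDecomposableOn.exists_adj_isLeafAt (C : G.Coloring Bool)
    (hvd : VertexDecomposableOn G A) (hv : v ∈ A) (hnbr : ∃ y ∈ A, G.Adj v y) :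
    ∃ u, G.Adj v u ∧ ∃ w ∈ A, IsLeafAt G A w u := by
  obtain ⟨y, hy, hvy⟩ := hnbr
  have hwc := hvd.wellCoveredOn
  obtain ⟨g, hg, hgA⟩ := hwc.exists_injOn_adj C (C y)
  have hX : ∀ u ∈ A, G.Adj v u → u ∈ nonIsolatedOfColor C A (C y) := fun u hu hvu =>
    mem_filter.2 ⟨hu, C.eq_of_adj_of_adj hvu.symm hvy, v, hv, hvu.symm⟩
  obtain ⟨u, hu, hmin⟩ := (A.filter (G.Adj v)).exists_min_image
    (fun u => (A.filter (G.Adj (g u))).card) ⟨y, mem_filter.2 ⟨hy, hvy⟩⟩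
  obtain ⟨huA, hvu⟩ := mem_filter.1 hu
  have huX := hX u huA hvu
  obtain ⟨hguA, hugu⟩ := hgA u huX
  refine ⟨u, hvu, g u, hguA, hugu.symm, fun r hr hgur => ?_⟩
  by_contra hru
  have hmu := hwc.meetsAllMaxIndep_of_injOn C hg hgA huX
  have hvr : G.Adj v r := hmu.adj hv hr hvu.symm hgur
  have hrX := hX r hr hvr
  have hmr := hwc.meetsAllMaxIndep_of_injOn C hg hgA hrX
  have hN : A.filter (G.Adj (g r)) = A.filter (G.Adj (g u)) :=
    eq_of_subset_of_card_le (hmr.filter_adj_subset hguA hgur.symm)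
      (hmin r (mem_filter.2 ⟨hr, hvr⟩))
  have hgru : G.Adj (g r) u := (mem_filter.1 (hN ▸ mem_filter.2 ⟨huA, hugu.symm⟩)).2
  exact hvd.not_meetsAllMaxIndep_of_cycle C huA hguA hr (hgA r hrX).1 hugu hgur
    (hgA r hrX).2 hgru (Ne.symm hru) (fun h => hru (hg hrX huX h.symm)) hmu hmr

/-- If a bipartite graph (one whose vertex set is partitioned into two
independent sets) is vertex decomposable, then its set of shedding vertices is a
dominating set. -/
theorem statement9 {V : Type*} [Fintype V] (G : SimpleGraph V)
    (hbip : ∃ A : Set V, (∀ u ∈ A, ∀ v ∈ A, ¬ G.Adj u v) ∧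
      (∀ u ∉ A, ∀ v ∉ A, ¬ G.Adj u v))
    (hvd : VertexDecomposable G) :
    IsDominatingSet G (Shed G) := by
  obtain ⟨X, hX, hXc⟩ := hbip
  let C : G.Coloring Bool := SimpleGraph.Coloring.mk (fun v => decide (v ∈ X)) fun {u v} huv => by
    by_cases hu : u ∈ X <;> by_cases hv : v ∈ X <;> simp_all
  intro v hv
  by_cases hnbr : ∃ y ∈ univ, G.Adj v y
  · obtain ⟨u, hvu, w, hw, hwu⟩ := hvd.exists_adj_isLeafAt C (mem_univ v) hnbr
    exact ⟨u, hwu.vertexDecomposableOn hvd hw (mem_univ u), hvu.symm⟩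
  · push Not at hnbr
    have h := hvd.erase_of_isolated (mem_univ v) hnbr
    exact absurd ⟨h, (delClosedNbhd_of_isolated hnbr).symm ▸ h⟩ hv
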